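/- arXiv:1004.1444 — 2 statements merged into one kernel-verified Lean document; each statement's English description precedes it below -/
import Mathlib

section
/- Let k and n be integers with 0 ≤ k ≤ n, and let α satisfy n < α ≤ n+1. Let {z_j} ⊂ 𝔻 be a sequence of pairwise distinct points having no accumulation point inside 𝔻, set d_j := inf_{l≠j} |z_j − z_l| and E := clos{z_j}. Define φ_s : E → ℂ for s = 0,…,n by φ_s ≡ 0 for s ≠ k, φ_k(z_j) := d_j^{α−k} for all j, and φ_k := 0 on E ∩ 𝕋. Then (φ_0,…,φ_n) is an α-admissible jet on E; in fact, for all z, w ∈ E and every s ∈ {0,…,n}, |φ_s(z) − ∑_{m=0}^{n−s} φ_{s+m}(w)(z−w)^m/m!| ≤ |z−w|^{α−s}. -/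
/-! Only `φ_k` is nonzero, so every Taylor sum of the jet collapses to the single term
`φ_k(w) (z - w)^(k-s) / (k-s)!`. Since `{z_j}` does not accumulate in `𝔻`, every point of `E`
is some `z_j` or lies on `𝕋`; hence `|φ_k(w)| ≤ |z - w|^(α-k)` for distinct `z, w ∈ E`
(at `w = z_j` because `d_j ≤ |z - z_j|`). This gives the bound for `s < k`, and for `s = k`
it suffices that `φ_k ≥ 0`, so that `|φ_k(z) - φ_k(w)| ≤ max (φ_k(z), φ_k(w))`. -/

open Complex Metric Filter MeasureTheory

noncomputable section

/-- Membership in the analytic Lipschitz space `A^α` on the unit disk: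
`f` is analytic and bounded on `𝔻`, and its derivative of order `m := ⌊α⌋ + 1`
satisfies `|f^(m)(z)| ≤ C (1 - |z|)^(α - m)`. -/
def MemA (α : ℝ) (f : ℂ → ℂ) : Prop :=
  DifferentiableOn ℂ f (ball (0:ℂ) 1) ∧
  (∃ M : ℝ, ∀ z ∈ ball (0:ℂ) 1, ‖f z‖ ≤ M) ∧
  (∃ C : ℝ, ∀ z ∈ ball (0:ℂ) 1,
    ‖iteratedDeriv (⌊α⌋₊ + 1) f z‖ ≤
      C * (1 - ‖z‖) ^ (α - ((⌊α⌋₊ : ℝ) + 1)))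

/-- Membership in `H^∞_N`: `f` is analytic on `𝔻` and both `f` and `f^(N)` are bounded there. -/
def MemH (N : ℕ) (f : ℂ → ℂ) : Prop :=
  DifferentiableOn ℂ f (ball (0:ℂ) 1) ∧
  (∃ M : ℝ, ∀ z ∈ ball (0:ℂ) 1, ‖f z‖ ≤ M) ∧
  (∃ M : ℝ, ∀ z ∈ ball (0:ℂ) 1, ‖iteratedDeriv N f z‖ ≤ M)

/-- `θ` is an inner function: bounded and analytic on `𝔻`, with radial limits of
modulus `1` at almost every boundary point. -/
def IsInner (θ : ℂ → ℂ) : Prop :=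
  DifferentiableOn ℂ θ (ball (0:ℂ) 1) ∧
  (∃ M : ℝ, ∀ z ∈ ball (0:ℂ) 1, ‖θ z‖ ≤ M) ∧
  (∀ᵐ t : ℝ ∂volume,
    Tendsto (fun r : ℝ => ‖θ ((r : ℂ) * Complex.exp ((t : ℂ) * Complex.I))‖)
      (nhdsWithin 1 (Set.Iio 1)) (nhds 1))

/-- The Blaschke product with zero sequence `zs`. -/
def blaschkeProd (zs : ℕ → ℂ) (z : ℂ) : ℂ :=
  ∏' j, ((starRingEnd ℂ) (zs j) / (‖zs j‖ : ℂ)) *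
    ((zs j - z) / (1 - (starRingEnd ℂ) (zs j) * z))

/-- `dsep zs j = inf_{l ≠ j} |z_j - z_l|`. -/
def dsep (zs : ℕ → ℂ) (j : ℕ) : ℝ :=
  ⨅ l : {l : ℕ // l ≠ j}, ‖zs j - zs l.1‖

/-- The pseudohyperbolic distance `ρ(z,w) = |z - w| / |1 - conj w * z|`. -/
def pseudoDist (z w : ℂ) : ℝ :=
  ‖z - w‖ / ‖1 - (starRingEnd ℂ) w * z‖

/-- `X` is an ideal subspace of the space of functions on `𝔻` described by the predicate `Y`. -/
def IsIdealSubspace (Y : (ℂ → ℂ) → Prop) (X : Set (ℂ → ℂ)) : Prop :=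
  ∀ f ∈ X, ∀ g : ℂ → ℂ, Y g →
    (∀ z ∈ ball (0:ℂ) 1, ‖g z‖ ≤ ‖f z‖) → g ∈ X

/-- `(φ_0, …, φ_n)` is an `α`-admissible jet on `E`. -/
def AdmissibleJet (α : ℝ) (n : ℕ) (E : Set ℂ) (φ : ℕ → ℂ → ℂ) : Prop :=
  ∃ C : ℝ, ∀ z ∈ E, ∀ w ∈ E, ∀ s ≤ n,
    ‖φ s z -
        ∑ m ∈ Finset.range (n - s + 1), φ (s + m) w * (z - w) ^ m / (Nat.factorial m : ℂ)‖ ≤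
      C * ‖z - w‖ ^ (α - (s : ℝ))

/-- `E` is an `A^α`-interpolating set (here `n = ⌊α⌋`): every `α`-admissible jet on `E`
is the jet of derivatives (within the closed disk) of some function in `A^α`. -/
def IsAInterpSet (α : ℝ) (n : ℕ) (E : Set ℂ) : Prop :=
  IsClosed E ∧ E ⊆ closedBall (0:ℂ) 1 ∧
  ∀ φ : ℕ → ℂ → ℂ, AdmissibleJet α n E φ →
    ∃ g : ℂ → ℂ, MemA α g ∧
      ∀ s ≤ n, ∀ z ∈ E, iteratedDerivWithin s g (closedBall (0:ℂ) 1) z = φ s z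

/-- `E` is an `H^∞_1`-interpolating set: every Lipschitz function on `E` extends to
a function in `H^∞_1`. -/
def IsH1InterpSet (E : Set ℂ) : Prop :=
  IsClosed E ∧ E ⊆ closedBall (0:ℂ) 1 ∧
  ∀ φ : ℂ → ℂ,
    (∃ C : ℝ, ∀ z ∈ E, ∀ w ∈ E, ‖φ z - φ w‖ ≤ C * ‖z - w‖) →
    ∃ f : ℂ → ℂ, MemH 1 f ∧ ∀ z ∈ E, f z = φ z

/-- The ideal `J_k = {f ∈ A^α : f B^k ∈ A^α}`. -/
def Jset (α : ℝ) (B : ℂ → ℂ) (k : ℕ) : Set (ℂ → ℂ) :=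
  {f | MemA α f ∧ MemA α (fun z => f z * (B z) ^ k)}

/-- The ideal `I_k = {f ∈ H^∞_{N} : f B^k ∈ H^∞_{N}}`. -/
def Iset (N : ℕ) (B : ℂ → ℂ) (k : ℕ) : Set (ℂ → ℂ) :=
  {f | MemH N f ∧ MemH N (fun z => f z * (B z) ^ k)}

/-- Arclength measure on the unit circle `𝕋 ⊆ ℂ`. -/
def arcMeasure : Measure ℂ :=
  Measure.map (fun t : ℝ => Complex.exp ((t : ℂ) * Complex.I))
    (volume.restrict (Set.Ico 0 (2 * Real.pi)))

/-- `S` is a singular inner function: `S = exp(-∫ (ζ+z)/(ζ-z) dμ(ζ))` for some finite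
nonnegative measure `μ` on the unit circle which is singular with respect to arclength. -/
def IsSingularInner (S : ℂ → ℂ) : Prop :=
  ∃ μ : Measure ℂ, IsFiniteMeasure μ ∧
    μ (Set.univ \ sphere (0:ℂ) 1) = 0 ∧
    μ.MutuallySingular arcMeasure ∧
    ∀ z ∈ ball (0:ℂ) 1, S z = Complex.exp (-∫ ζ, (ζ + z) / (ζ - z) ∂μ)

open Set

/-- The Taylor polynomial at `w` of the `s`-th component of the jet `(φ_0, …, φ_n)`,
evaluated at `z`. -/
def jetTaylor (n : ℕ) (φ : ℕ → ℂ → ℂ) (s : ℕ) (w z : ℂ) : ℂ :=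
  ∑ m ∈ Finset.range (n - s + 1), φ (s + m) w * (z - w) ^ m / (m.factorial : ℂ)

section SingleComponent

variable {n k s : ℕ} {φ : ℕ → ℂ → ℂ} {E : Set ℂ} {w z : ℂ}

theorem jetTaylor_eq_zero_of_lt (hφ₀ : ∀ s ≤ n, s ≠ k → ∀ z ∈ E, φ s z = 0)
    (hks : k < s) (hsn : s ≤ n) (hw : w ∈ E) : jetTaylor n φ s w z = 0 :=
  Finset.sum_eq_zero fun m hm => by
    have := Finset.mem_range.mp hm
    rw [hφ₀ (s + m) (by omega) (by omega) w hw, zero_mul, zero_div]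

theorem jetTaylor_eq_single (hφ₀ : ∀ s ≤ n, s ≠ k → ∀ z ∈ E, φ s z = 0)
    (hsk : s ≤ k) (hkn : k ≤ n) (hw : w ∈ E) :
    jetTaylor n φ s w z = φ k w * (z - w) ^ (k - s) / ((k - s).factorial : ℂ) := by
  rw [jetTaylor, Finset.sum_eq_single (k - s), Nat.add_sub_cancel' hsk]
  · intro m hm hne
    have := Finset.mem_range.mp hm
    rw [hφ₀ (s + m) (by omega) (by omega) w hw, zero_mul, zero_div]
  · exact fun h => absurd (Finset.mem_range.mpr (by omega)) h

theorem norm_sub_le_of_eq_ofReal_norm {a b : ℂ} {c : ℝ} (ha : a = ‖a‖) (hb : b = ‖b‖)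
    (hac : ‖a‖ ≤ c) (hbc : ‖b‖ ≤ c) : ‖a - b‖ ≤ c := by
  rw [ha, hb, ← ofReal_sub, norm_real, Real.norm_eq_abs, abs_sub_le_iff]
  constructor <;> linarith [norm_nonneg a, norm_nonneg b]

theorem norm_sub_jetTaylor_le_of_single {α : ℝ} (hkn : k ≤ n)
    (hφ₀ : ∀ s ≤ n, s ≠ k → ∀ z ∈ E, φ s z = 0)
    (hφ_nonneg : ∀ z ∈ E, φ k z = ‖φ k z‖)
    (hφ_le : ∀ z ∈ E, ∀ w ∈ E, z ≠ w → ‖φ k w‖ ≤ ‖z - w‖ ^ (α - k))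
    (hz : z ∈ E) (hw : w ∈ E) (hs : s ≤ n) :
    ‖φ s z - jetTaylor n φ s w z‖ ≤ ‖z - w‖ ^ (α - s) := by
  have hpow_nonneg : 0 ≤ ‖z - w‖ ^ (α - s) := Real.rpow_nonneg (norm_nonneg _) _
  obtain hks | rfl | hsk := lt_trichotomy k s
  · rwa [jetTaylor_eq_zero_of_lt hφ₀ hks hs hw, hφ₀ s hs hks.ne' z hz, sub_zero, norm_zero]
  · rw [jetTaylor_eq_single hφ₀ le_rfl hkn hw, Nat.sub_self, pow_zero, Nat.factorial_zero,
      Nat.cast_one, mul_one, div_one]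
    obtain rfl | hzw := eq_or_ne z w
    · rwa [sub_self, norm_zero]
    have hφz_le : ‖φ k z‖ ≤ ‖z - w‖ ^ (α - k) := by
      rw [norm_sub_rev]
      exact hφ_le w hw z hz hzw.symm
    exact norm_sub_le_of_eq_ofReal_norm (hφ_nonneg z hz) (hφ_nonneg w hw) hφz_le
      (hφ_le z hz w hw hzw)
  · rw [jetTaylor_eq_single hφ₀ hsk.le hkn hw, hφ₀ s hs hsk.ne z hz, zero_sub, norm_neg,
      norm_div, norm_mul, norm_pow, norm_natCast]
    obtain rfl | hzw := eq_or_ne z w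
    · rw [sub_self, norm_zero, zero_pow (by omega), mul_zero, zero_div]
      exact Real.rpow_nonneg le_rfl _
    have hfac : (1 : ℝ) ≤ (k - s).factorial := Nat.one_le_cast.mpr (Nat.factorial_pos _)
    calc ‖φ k w‖ * ‖z - w‖ ^ (k - s) / (k - s).factorial
        ≤ ‖φ k w‖ * ‖z - w‖ ^ (k - s) := div_le_self (by positivity) hfac
      _ ≤ ‖z - w‖ ^ (α - k) * ‖z - w‖ ^ ((k - s : ℕ) : ℝ) := by
        rw [Real.rpow_natCast]
        gcongr
        exact hφ_le z hz w hw hzw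
      _ = ‖z - w‖ ^ (α - s) := by
        rw [← Real.rpow_add (norm_pos_iff.mpr (sub_ne_zero.mpr hzw)), Nat.cast_sub hsk.le]
        ring_nf

end SingleComponent

theorem mapClusterPt_atTop_of_mem_closure_range {X : Type*} [TopologicalSpace X] [T1Space X]
    {u : ℕ → X} {x : X} (hx : x ∈ closure (range u)) (hxu : x ∉ range u) :
    MapClusterPt x atTop u := by
  rw [mapClusterPt_atTop_iff_forall_mem_closure]
  intro N
  rw [← image_univ, ← Iio_union_Ici (a := N), image_union, closure_union,
    ((finite_Iio N).image u).isClosed.closure_eq] at hx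
  exact hx.resolve_left fun h => hxu (image_subset_range _ _ h)

theorem norm_eq_one_of_mem_closure_range {zs : ℕ → ℂ} (hzs : ∀ j, zs j ∈ ball (0 : ℂ) 1)
    (hacc : ∀ z ∈ ball (0 : ℂ) 1, ¬ MapClusterPt z atTop zs) {z : ℂ}
    (hz : z ∈ closure (range zs)) (hzs' : z ∉ range zs) : ‖z‖ = 1 := by
  have hz_le : ‖z‖ ≤ 1 := by
    have := closure_minimal (range_subset_iff.mpr fun j => ball_subset_closedBall (hzs j))
      isClosed_closedBall hz
    rwa [mem_closedBall_zero_iff] at this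
  refine hz_le.eq_of_not_lt fun hz_lt => hacc z (mem_ball_zero_iff.mpr hz_lt) ?_
  exact mapClusterPt_atTop_of_mem_closure_range hz hzs'

theorem dsep_nonneg (zs : ℕ → ℂ) (j : ℕ) : 0 ≤ dsep zs j :=
  Real.iInf_nonneg fun _ => norm_nonneg _

theorem dsep_le_norm_sub {zs : ℕ → ℂ} {j : ℕ} {w : ℂ} (hw : w ∈ closure (range zs))
    (hne : w ≠ zs j) : dsep zs j ≤ ‖zs j - w‖ := by
  have hclosed : IsClosed ({zs j} ∪ {x : ℂ | dsep zs j ≤ ‖zs j - x‖}) :=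
    isClosed_singleton.union (isClosed_le continuous_const (by fun_prop))
  have hrange : range zs ⊆ {zs j} ∪ {x : ℂ | dsep zs j ≤ ‖zs j - x‖} := by
    rintro _ ⟨l, rfl⟩
    obtain rfl | hl := eq_or_ne l j
    · exact Or.inl rfl
    · exact Or.inr <| ciInf_le ⟨0, forall_mem_range.mpr fun _ => norm_nonneg _⟩
        (⟨l, hl⟩ : {l // l ≠ j})
  exact (closure_minimal hrange hclosed hw).resolve_left hne

theorem admissible_jet_lemma_general
    (k n : ℕ) (hkn : k ≤ n) (α : ℝ) (hα₁ : (n : ℝ) < α)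
    (zs : ℕ → ℂ) (hzs : ∀ j, zs j ∈ ball (0:ℂ) 1)
    (hacc : ∀ z ∈ ball (0:ℂ) 1, ¬ ClusterPt z (Filter.map zs Filter.atTop))
    (φ : ℕ → ℂ → ℂ)
    (hφ₀ : ∀ s ≤ n, s ≠ k → ∀ z ∈ closure (Set.range zs), φ s z = 0)
    (hφk : ∀ j, φ k (zs j) = ((dsep zs j ^ (α - (k : ℝ)) : ℝ) : ℂ))
    (hφT : ∀ z ∈ closure (Set.range zs), ‖z‖ = 1 → φ k z = 0) :
    ∀ z ∈ closure (Set.range zs), ∀ w ∈ closure (Set.range zs), ∀ s ≤ n,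
      ‖φ s z -
          ∑ m ∈ Finset.range (n - s + 1), φ (s + m) w * (z - w) ^ m / (Nat.factorial m : ℂ)‖ ≤
        ‖z - w‖ ^ (α - (s : ℝ)) := by
  have hγ : 0 ≤ α - k := by linarith [(Nat.cast_le (α := ℝ)).mpr hkn]
  have hcases : ∀ v ∈ closure (range zs), v ∈ range zs ∨ ‖v‖ = 1 := fun v hv =>
    or_iff_not_imp_left.mpr (norm_eq_one_of_mem_closure_range hzs hacc hv)
  have hφ_norm : ∀ j, ‖φ k (zs j)‖ = dsep zs j ^ (α - k) := fun j => by
    rw [hφk, norm_real, Real.norm_of_nonneg (Real.rpow_nonneg (dsep_nonneg zs j) _)]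
  have hφ_nonneg : ∀ v ∈ closure (range zs), φ k v = ‖φ k v‖ := fun v hv => by
    obtain ⟨j, rfl⟩ | hv1 := hcases v hv
    · rw [hφ_norm, hφk]
    · rw [hφT v hv hv1, norm_zero, ofReal_zero]
  have hφ_le : ∀ u ∈ closure (range zs), ∀ v ∈ closure (range zs), u ≠ v →
      ‖φ k v‖ ≤ ‖u - v‖ ^ (α - k) := fun u hu v hv huv => by
    obtain ⟨j, rfl⟩ | hv1 := hcases v hv
    · rw [hφ_norm, norm_sub_rev]
      exact Real.rpow_le_rpow (dsep_nonneg zs j) (dsep_le_norm_sub hu huv) hγ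
    · rw [hφT v hv hv1, norm_zero]
      exact Real.rpow_nonneg (norm_nonneg _) _
  exact fun z hz w hw s hs =>
    norm_sub_jetTaylor_le_of_single hkn hφ₀ hφ_nonneg hφ_le hz hw hs

/-- **Lemma (admissible jet).** Let `0 ≤ k ≤ n < α ≤ n+1`, and let `{z_j} ⊆ 𝔻` be a sequence
of distinct points with no accumulation point in `𝔻`. Define `φ_s ≡ 0` for `s ≠ k`,
`φ_k(z_j) = d_j^(α-k)` and `φ_k = 0` on `E ∩ 𝕋`, where `E = clos{z_j}`. Then
`(φ_0, …, φ_n)` is an `α`-admissible jet on `E`; in fact the jet inequalities hold with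
constant `C = 1`. -/
theorem admissible_jet_lemma
    (k n : ℕ) (hkn : k ≤ n) (α : ℝ) (hα₁ : (n : ℝ) < α) (hα₂ : α ≤ (n : ℝ) + 1)
    (zs : ℕ → ℂ) (hzs : ∀ j, zs j ∈ ball (0:ℂ) 1)
    (hinj : Function.Injective zs)
    (hacc : ∀ z ∈ ball (0:ℂ) 1, ¬ ClusterPt z (Filter.map zs Filter.atTop))
    (φ : ℕ → ℂ → ℂ)
    (hφ₀ : ∀ s ≤ n, s ≠ k → ∀ z ∈ closure (Set.range zs), φ s z = 0)
    (hφk : ∀ j, φ k (zs j) = ((dsep zs j ^ (α - (k : ℝ)) : ℝ) : ℂ))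
    (hφT : ∀ z ∈ closure (Set.range zs), ‖z‖ = 1 → φ k z = 0) :
    ∀ z ∈ closure (Set.range zs), ∀ w ∈ closure (Set.range zs), ∀ s ≤ n,
      ‖φ s z -
          ∑ m ∈ Finset.range (n - s + 1), φ (s + m) w * (z - w) ^ m / (Nat.factorial m : ℂ)‖ ≤
        ‖z - w‖ ^ (α - (s : ℝ)) :=
  admissible_jet_lemma_general k n hkn α hα₁ zs hzs hacc φ hφ₀ hφk hφT
end
end

section
/- Suppose B is an interpolating Blaschke product with pairwise distinct zeros {z_j}, and let δ := inf_j ∏_{l≠j} ρ(z_j,z_l) > 0 be its Carleson constant. Then for every m ∈ ℕ there exist constants c, C > 0, depending only on m and δ, such that c(1−|z_j|)^{−m} ≤ |(B^m)^{(m)}(z_j)| ≤ C(1−|z_j|)^{−m} for all j. -/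
open Complex Metric Filter MeasureTheory

noncomputable section

/-!
Near a zero `a = z_j` the Blaschke product factors as `B(z) = (z - a) W(z)` with `W` holomorphic:
the factor at `a` is `(z - a)` times `-(conj a / |a|) / (1 - conj a z)`, and the product of the
other factors converges locally uniformly on the disk because
`|b_w(z) - 1| ≤ 2 (1 - |w|) / (1 - |z|)`. Hence `(B^m)^(m)(a) = m! W(a)^m`, and
`|W(a)| = (1 - |a|²)⁻¹ ∏_{l ≠ j} ρ(a, z_l)` lies between `δ / (2 (1 - |a|))` and `1 / (1 - |a|)`.
-/

open Topology

def blaschkeFactor (w z : ℂ) : ℂ :=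
  (starRingEnd ℂ) w / (‖w‖ : ℂ) * ((w - z) / (1 - (starRingEnd ℂ) w * z))

theorem normSq_one_sub_conj_mul_sub_normSq_sub (w z : ℂ) :
    normSq (1 - (starRingEnd ℂ) w * z) - normSq (z - w) =
      (1 - normSq w) * (1 - normSq z) := by
  simp only [normSq_apply, sub_re, sub_im, mul_re, mul_im, one_re, one_im, conj_re, conj_im]
  ring

theorem norm_sub_le_norm_one_sub_conj_mul {w z : ℂ} (hw : ‖w‖ ≤ 1) (hz : ‖z‖ ≤ 1) :
    ‖z - w‖ ≤ ‖1 - (starRingEnd ℂ) w * z‖ := by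
  have hw' : normSq w ≤ 1 := by rw [normSq_eq_norm_sq]; nlinarith [norm_nonneg w]
  have hz' : normSq z ≤ 1 := by rw [normSq_eq_norm_sq]; nlinarith [norm_nonneg z]
  have := normSq_one_sub_conj_mul_sub_normSq_sub w z
  rw [norm_def, norm_def]
  exact Real.sqrt_le_sqrt (by nlinarith)

theorem one_sub_norm_le_norm_one_sub_conj_mul {w : ℂ} (z : ℂ) (hw : ‖w‖ ≤ 1) :
    1 - ‖z‖ ≤ ‖1 - (starRingEnd ℂ) w * z‖ := by
  have : ‖(starRingEnd ℂ) w * z‖ ≤ ‖z‖ := by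
    rw [norm_mul, norm_conj]
    nlinarith [norm_nonneg z]
  linarith [norm_sub_norm_le (1 : ℂ) ((starRingEnd ℂ) w * z), norm_one (α := ℂ)]

theorem one_sub_conj_mul_ne_zero {w z : ℂ} (hw : ‖w‖ ≤ 1) (hz : ‖z‖ < 1) :
    1 - (starRingEnd ℂ) w * z ≠ 0 :=
  norm_pos_iff.mp ((sub_pos.mpr hz).trans_le (one_sub_norm_le_norm_one_sub_conj_mul z hw))

theorem pseudoDist_nonneg (z w : ℂ) : 0 ≤ pseudoDist z w :=
  div_nonneg (norm_nonneg _) (norm_nonneg _)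

theorem pseudoDist_le_one {z w : ℂ} (hz : ‖z‖ ≤ 1) (hw : ‖w‖ ≤ 1) : pseudoDist z w ≤ 1 :=
  div_le_one_of_le₀ (norm_sub_le_norm_one_sub_conj_mul hw hz) (norm_nonneg _)

theorem norm_conj_div_norm {w : ℂ} (hw : w ≠ 0) : ‖(starRingEnd ℂ) w / (‖w‖ : ℂ)‖ = 1 := by
  rw [norm_div, norm_conj, norm_real, Real.norm_of_nonneg (norm_nonneg w),
    div_self (norm_ne_zero_iff.mpr hw)]

theorem norm_blaschkeFactor {w : ℂ} (z : ℂ) (hw : w ≠ 0) :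
    ‖blaschkeFactor w z‖ = pseudoDist z w := by
  rw [blaschkeFactor, norm_mul, norm_conj_div_norm hw, one_mul, norm_div, ← norm_neg (w - z),
    neg_sub, pseudoDist]

theorem blaschkeFactor_eq_sub_mul (w z : ℂ) :
    blaschkeFactor w z =
      (z - w) * (-((starRingEnd ℂ) w / (‖w‖ : ℂ)) / (1 - (starRingEnd ℂ) w * z)) := by
  rw [blaschkeFactor]
  ring

theorem blaschkeFactor_sub_one {w : ℂ} (z : ℂ) (hw : w ≠ 0)
    (hd : 1 - (starRingEnd ℂ) w * z ≠ 0) :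
    blaschkeFactor w z - 1 = -((1 - (‖w‖ : ℂ)) * (1 + z * ((starRingEnd ℂ) w / (‖w‖ : ℂ)))) /
      (1 - (starRingEnd ℂ) w * z) := by
  have hnorm : (‖w‖ : ℂ) ≠ 0 := ofReal_ne_zero.mpr (norm_ne_zero_iff.mpr hw)
  have hconj : (starRingEnd ℂ) w * w = (‖w‖ : ℂ) ^ 2 := by
    rw [mul_comm, mul_conj, normSq_eq_norm_sq, ofReal_pow]
  rw [blaschkeFactor]
  field_simp
  linear_combination hconj

theorem norm_blaschkeFactor_sub_one_le {w z : ℂ} (hw0 : w ≠ 0) (hw : ‖w‖ ≤ 1) (hz : ‖z‖ < 1) :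
    ‖blaschkeFactor w z - 1‖ ≤ 2 * (1 - ‖w‖) / (1 - ‖z‖) := by
  have hnum : ‖1 + z * ((starRingEnd ℂ) w / (‖w‖ : ℂ))‖ ≤ 2 := by
    calc _ ≤ ‖(1 : ℂ)‖ + ‖z‖ * 1 := by
          rw [← norm_conj_div_norm hw0, ← norm_mul]; exact norm_add_le _ _
      _ ≤ 2 := by rw [norm_one]; linarith
  have h1w : ‖1 - (‖w‖ : ℂ)‖ = 1 - ‖w‖ := by
    rw [← ofReal_one, ← ofReal_sub, norm_real, Real.norm_of_nonneg (by linarith)]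
  rw [blaschkeFactor_sub_one z hw0 (one_sub_conj_mul_ne_zero hw hz), norm_div, norm_neg,
    norm_mul, h1w, mul_comm 2]
  exact div_le_div₀ (by nlinarith) (by gcongr) (by linarith)
    (one_sub_norm_le_norm_one_sub_conj_mul z hw)

theorem differentiableOn_blaschkeFactor {w : ℂ} (hw : ‖w‖ ≤ 1) :
    DifferentiableOn ℂ (blaschkeFactor w) (ball 0 1) := by
  intro z hz
  have := one_sub_conj_mul_ne_zero hw (mem_ball_zero_iff.mp hz)
  unfold blaschkeFactor
  fun_prop (disch := assumption)

section BlaschkeProduct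

variable {ι : Type*} {zs : ι → ℂ}

theorem hasProdLocallyUniformlyOn_blaschkeFactor (hzs : ∀ l, zs l ∈ ball (0 : ℂ) 1 \ {0})
    (hsum : Summable fun l => 1 - ‖zs l‖) :
    HasProdLocallyUniformlyOn (fun l => blaschkeFactor (zs l))
      (fun z => ∏' l, blaschkeFactor (zs l) z) (ball 0 1) := by
  have hnorm : ∀ l, ‖zs l‖ ≤ 1 := fun l => (mem_ball_zero_iff.mp (hzs l).1).le
  have hne : ∀ l, zs l ≠ 0 := fun l => (hzs l).2
  refine hasProdLocallyUniformlyOn_of_forall_compact isOpen_ball fun K hK hKc => ?_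
  obtain ⟨r, hr, hKr⟩ := exists_lt_subset_ball hKc.isClosed hK
  have hbound :
      ∀ l, ∀ z ∈ K, ‖blaschkeFactor (zs l) z - 1‖ ≤ 2 / (1 - r) * (1 - ‖zs l‖) := by
    intro l z hz
    have hzr : ‖z‖ < r := mem_ball_zero_iff.mp (hKr hz)
    calc _ ≤ 2 * (1 - ‖zs l‖) / (1 - ‖z‖) :=
          norm_blaschkeFactor_sub_one_le (hne l) (hnorm l) (hzr.trans hr)
      _ ≤ 2 * (1 - ‖zs l‖) / (1 - r) := by
          gcongr
          linarith [hnorm l]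
      _ = _ := by ring
  have := Summable.hasProdUniformlyOn_one_add hKc (hsum.mul_left (2 / (1 - r)))
    (.of_forall hbound) fun l =>
      ((differentiableOn_blaschkeFactor (hnorm l)).mono hK).continuousOn.sub continuousOn_const
  simpa only [add_sub_cancel] using this

theorem hasProd_blaschkeFactor (hzs : ∀ l, zs l ∈ ball (0 : ℂ) 1 \ {0})
    (hsum : Summable fun l => 1 - ‖zs l‖) {z : ℂ} (hz : z ∈ ball (0 : ℂ) 1) :
    HasProd (fun l => blaschkeFactor (zs l) z) (∏' l, blaschkeFactor (zs l) z) :=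
  (hasProdLocallyUniformlyOn_blaschkeFactor hzs hsum).hasProd hz

theorem differentiableOn_tprod_blaschkeFactor (hzs : ∀ l, zs l ∈ ball (0 : ℂ) 1 \ {0})
    (hsum : Summable fun l => 1 - ‖zs l‖) :
    DifferentiableOn ℂ (fun z => ∏' l, blaschkeFactor (zs l) z) (ball 0 1) :=
  (hasProdLocallyUniformlyOn_blaschkeFactor hzs hsum).differentiableOn
    (.of_forall fun _ => DifferentiableOn.fun_finsetProd fun l _ =>
      differentiableOn_blaschkeFactor (mem_ball_zero_iff.mp (hzs l).1).le) isOpen_ball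

theorem le_norm_tprod_blaschkeFactor (hzs : ∀ l, zs l ∈ ball (0 : ℂ) 1 \ {0})
    (hsum : Summable fun l => 1 - ‖zs l‖) {z : ℂ} (hz : z ∈ ball (0 : ℂ) 1) {δ : ℝ}
    (hδ : ∀ F : Finset ι, δ ≤ ∏ l ∈ F, pseudoDist z (zs l)) :
    δ ≤ ‖∏' l, blaschkeFactor (zs l) z‖ :=
  ge_of_tendsto' (hasProd_blaschkeFactor hzs hsum hz).norm fun F => by
    simpa only [norm_blaschkeFactor z (hzs _).2] using hδ F

theorem norm_tprod_blaschkeFactor_le_one (hzs : ∀ l, zs l ∈ ball (0 : ℂ) 1 \ {0})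
    (hsum : Summable fun l => 1 - ‖zs l‖) {z : ℂ} (hz : z ∈ ball (0 : ℂ) 1) :
    ‖∏' l, blaschkeFactor (zs l) z‖ ≤ 1 :=
  le_of_tendsto' (hasProd_blaschkeFactor hzs hsum hz).norm fun F => by
    simp only [norm_blaschkeFactor z (hzs _).2]
    exact Finset.prod_le_one (fun l _ => pseudoDist_nonneg _ _) fun l _ =>
      pseudoDist_le_one (mem_ball_zero_iff.mp hz).le (mem_ball_zero_iff.mp (hzs l).1).le

end BlaschkeProduct

theorem iteratedDeriv_sub_pow_mul_self {𝕜 : Type*} [NontriviallyNormedField 𝕜] {H : 𝕜 → 𝕜}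
    {a : 𝕜} {m : ℕ} (hH : ContDiffAt 𝕜 m H a) :
    iteratedDeriv m (fun z => (z - a) ^ m * H z) a = m.factorial * H a := by
  have hpow (i : ℕ) :
      iteratedDeriv i (fun z => (z - a) ^ m) a = if i = m then (m.factorial : 𝕜) else 0 := by
    simp only [iteratedDeriv_comp_sub_const i (· ^ m) a, sub_self, iteratedDeriv_fun_pow_zero,
      Nat.cast_ite, Nat.cast_zero]
  rw [iteratedDeriv_fun_mul (by fun_prop) hH,
    Finset.sum_eq_single_of_mem m (Finset.self_mem_range_succ m)]
  · simp [hpow]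
  · intro i _ hi
    simp [hpow, hi]

theorem iteratedDeriv_pow_self_of_eventuallyEq_sub_mul {𝕜 : Type*} [NontriviallyNormedField 𝕜]
    {f W : 𝕜 → 𝕜} {a : 𝕜} {m : ℕ} (hW : ContDiffAt 𝕜 m W a)
    (hf : f =ᶠ[𝓝 a] fun z => (z - a) * W z) :
    iteratedDeriv m (fun z => f z ^ m) a = m.factorial * W a ^ m := by
  rw [Filter.EventuallyEq.iteratedDeriv_eq m (g := fun z => (z - a) ^ m * W z ^ m)]
  · exact iteratedDeriv_sub_pow_mul_self (hW.pow m)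
  · filter_upwards [hf] with z hz
    rw [hz, mul_pow]

/-- `B(z) / (z - z_j)`, extended analytically across `z_j`. -/
def blaschkeProdDivSub (zs : ℕ → ℂ) (j : ℕ) (z : ℂ) : ℂ :=
  -((starRingEnd ℂ) (zs j) / (‖zs j‖ : ℂ)) / (1 - (starRingEnd ℂ) (zs j) * z) *
    ∏' l : ({j}ᶜ : Set ℕ), blaschkeFactor (zs l) z

section BlaschkeProdDivSub

variable {zs : ℕ → ℂ} {j : ℕ}

theorem blaschkeProd_eq_sub_mul_blaschkeProdDivSub (hzs : ∀ l, zs l ∈ ball (0 : ℂ) 1 \ {0})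
    (hsum : Summable fun l => 1 - ‖zs l‖) {z : ℂ} (hz : z ∈ ball (0 : ℂ) 1) :
    blaschkeProd zs z = (z - zs j) * blaschkeProdDivSub zs j z := by
  have hj : HasProd (fun l : ({j} : Set ℕ) => blaschkeFactor (zs l) z)
      (blaschkeFactor (zs j) z) :=
    hasProd_singleton j fun l => blaschkeFactor (zs l) z
  have hrest := hasProd_blaschkeFactor (zs := fun l : ({j}ᶜ : Set ℕ) => zs l) (fun l => hzs l)
    (hsum.subtype _) hz
  have hall : HasProd (fun l => blaschkeFactor (zs l) z) _ := hj.mul_compl hrest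
  rw [show blaschkeProd zs z = ∏' l, blaschkeFactor (zs l) z from rfl, hall.tprod_eq,
    blaschkeProdDivSub, blaschkeFactor_eq_sub_mul, mul_assoc]

theorem differentiableOn_blaschkeProdDivSub (hzs : ∀ l, zs l ∈ ball (0 : ℂ) 1 \ {0})
    (hsum : Summable fun l => 1 - ‖zs l‖) :
    DifferentiableOn ℂ (blaschkeProdDivSub zs j) (ball 0 1) := by
  have hprod := differentiableOn_tprod_blaschkeFactor
    (zs := fun l : ({j}ᶜ : Set ℕ) => zs l) (fun l => hzs l) (hsum.subtype _)
  intro z hz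
  have := one_sub_conj_mul_ne_zero (mem_ball_zero_iff.mp (hzs j).1).le (mem_ball_zero_iff.mp hz)
  exact (DifferentiableAt.differentiableWithinAt (by fun_prop (disch := assumption))).mul
    (hprod z hz)

theorem norm_blaschkeProdDivSub_self (hzs : ∀ l, zs l ∈ ball (0 : ℂ) 1 \ {0}) :
    ‖blaschkeProdDivSub zs j (zs j)‖ =
      ‖∏' l : ({j}ᶜ : Set ℕ), blaschkeFactor (zs l) (zs j)‖ / (1 - ‖zs j‖ ^ 2) := by
  have hconj : 1 - (starRingEnd ℂ) (zs j) * zs j = ((1 - ‖zs j‖ ^ 2 : ℝ) : ℂ) := by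
    rw [mul_comm, mul_conj, normSq_eq_norm_sq]; push_cast; ring
  have hpos : 0 < 1 - ‖zs j‖ ^ 2 := by
    nlinarith [norm_nonneg (zs j), mem_ball_zero_iff.mp (hzs j).1]
  rw [blaschkeProdDivSub, norm_mul, norm_div, norm_neg, norm_conj_div_norm (hzs j).2, hconj,
    norm_real, Real.norm_of_nonneg hpos.le]
  ring

theorem div_le_norm_blaschkeProdDivSub_self (hzs : ∀ l, zs l ∈ ball (0 : ℂ) 1 \ {0})
    (hsum : Summable fun l => 1 - ‖zs l‖) {δ : ℝ}
    (hsep : ∀ F : Finset ℕ, j ∉ F → δ ≤ ∏ l ∈ F, pseudoDist (zs j) (zs l)) :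
    δ / (2 * (1 - ‖zs j‖)) ≤ ‖blaschkeProdDivSub zs j (zs j)‖ := by
  have hsep' (F : Finset ({j}ᶜ : Set ℕ)) : δ ≤ ∏ l ∈ F, pseudoDist (zs j) (zs l) := by
    simpa only [Finset.prod_map, Function.Embedding.coe_subtype] using
      hsep (F.map (.subtype _)) fun h => by simp at h
  have hP := le_norm_tprod_blaschkeFactor (zs := fun l : ({j}ᶜ : Set ℕ) => zs l)
    (fun l => hzs l) (hsum.subtype _) (hzs j).1 hsep'
  have ha := mem_ball_zero_iff.mp (hzs j).1
  rw [norm_blaschkeProdDivSub_self hzs]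
  calc δ / (2 * (1 - ‖zs j‖))
      _ ≤ ‖∏' l : ({j}ᶜ : Set ℕ), blaschkeFactor (zs l) (zs j)‖ / (2 * (1 - ‖zs j‖)) := by
        gcongr
      _ ≤ _ := div_le_div_of_nonneg_left (norm_nonneg _)
        (by nlinarith [norm_nonneg (zs j)]) (by nlinarith [norm_nonneg (zs j)])

theorem norm_blaschkeProdDivSub_self_le (hzs : ∀ l, zs l ∈ ball (0 : ℂ) 1 \ {0})
    (hsum : Summable fun l => 1 - ‖zs l‖) :
    ‖blaschkeProdDivSub zs j (zs j)‖ ≤ 1 / (1 - ‖zs j‖) := by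
  have hP := norm_tprod_blaschkeFactor_le_one (zs := fun l : ({j}ᶜ : Set ℕ) => zs l)
    (fun l => hzs l) (hsum.subtype _) (hzs j).1
  have ha := mem_ball_zero_iff.mp (hzs j).1
  rw [norm_blaschkeProdDivSub_self hzs]
  exact div_le_div₀ zero_le_one hP (sub_pos.mpr ha) (by nlinarith [norm_nonneg (zs j)])

end BlaschkeProdDivSub

theorem blaschke_pow_deriv_at_zeros_asymp_general
    (m : ℕ) (δ : ℝ) (hδ : 0 < δ) :
    ∃ c C : ℝ, 0 < c ∧ 0 < C ∧
      ∀ zs : ℕ → ℂ, (∀ j, zs j ∈ ball (0:ℂ) 1 \ {0}) →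
        (Summable fun j => 1 - ‖zs j‖) →
        Function.Injective zs →
        (∀ j, ∀ F : Finset ℕ, j ∉ F → δ ≤ ∏ l ∈ F, pseudoDist (zs j) (zs l)) →
        ∀ j,
          c / (1 - ‖zs j‖) ^ m ≤
            ‖iteratedDeriv m (fun z => (blaschkeProd zs z) ^ m) (zs j)‖ ∧
          ‖iteratedDeriv m (fun z => (blaschkeProd zs z) ^ m) (zs j)‖ ≤
            C / (1 - ‖zs j‖) ^ m := by
  refine ⟨m.factorial * (δ / 2) ^ m, m.factorial, by positivity, by positivity,
    fun zs hzs hsum _ hsep j => ?_⟩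
  have hball : ball (0 : ℂ) 1 ∈ 𝓝 (zs j) := isOpen_ball.mem_nhds (hzs j).1
  have hfactor :
      (blaschkeProd zs ·) =ᶠ[𝓝 (zs j)] fun z => (z - zs j) * blaschkeProdDivSub zs j z :=
    Filter.eventually_of_mem hball fun _ hz =>
      blaschkeProd_eq_sub_mul_blaschkeProdDivSub hzs hsum hz
  have hsmooth : ContDiffAt ℂ m (blaschkeProdDivSub zs j) (zs j) :=
    ((differentiableOn_blaschkeProdDivSub hzs hsum).analyticAt hball).contDiffAt
  have hr : 0 < 1 - ‖zs j‖ := sub_pos.mpr (mem_ball_zero_iff.mp (hzs j).1)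
  rw [iteratedDeriv_pow_self_of_eventuallyEq_sub_mul hsmooth hfactor, norm_mul, norm_pow,
    norm_natCast]
  constructor
  · calc m.factorial * (δ / 2) ^ m / (1 - ‖zs j‖) ^ m
        = m.factorial * (δ / (2 * (1 - ‖zs j‖))) ^ m := by
          rw [mul_div_assoc, ← div_pow, div_div]
      _ ≤ _ := by gcongr; exact div_le_norm_blaschkeProdDivSub_self hzs hsum (hsep j)
  · calc _ ≤ m.factorial * (1 / (1 - ‖zs j‖)) ^ m := by
          gcongr; exact norm_blaschkeProdDivSub_self_le hzs hsum
      _ = _ := by rw [one_div, inv_pow, div_eq_mul_inv]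

/-- **Lemma.** If `B` is an interpolating Blaschke product with zeros `{z_j}` and Carleson
constant at least `δ > 0`, then `|(B^m)^(m)(z_j)| ≍ (1-|z_j|)^(-m)`, with constants
depending only on `m` and `δ`. -/
theorem blaschke_pow_deriv_at_zeros_asymp
    (m : ℕ) (hm : 1 ≤ m) (δ : ℝ) (hδ : 0 < δ) :
    ∃ c C : ℝ, 0 < c ∧ 0 < C ∧
      ∀ zs : ℕ → ℂ, (∀ j, zs j ∈ ball (0:ℂ) 1 \ {0}) →
        (Summable fun j => 1 - ‖zs j‖) →
        Function.Injective zs →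
        (∀ j, ∀ F : Finset ℕ, j ∉ F → δ ≤ ∏ l ∈ F, pseudoDist (zs j) (zs l)) →
        ∀ j,
          c / (1 - ‖zs j‖) ^ m ≤
            ‖iteratedDeriv m (fun z => (blaschkeProd zs z) ^ m) (zs j)‖ ∧
          ‖iteratedDeriv m (fun z => (blaschkeProd zs z) ^ m) (zs j)‖ ≤
            C / (1 - ‖zs j‖) ^ m :=
  blaschke_pow_deriv_at_zeros_asymp_general m δ hδ

end
end
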